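/- arXiv:1008.1714 — 3 statements merged into one kernel-verified Lean document; each statement's English description precedes it below -/
import Mathlib

section
/- The pairing * is associative: if x : Fin n → SignType has dimension p, y : Fin p → SignType has dimension q, and z : Fin q → SignType, then (using the fact that x * y has dimension q, so that (x * y) * z is defined) one has (x * y) * z = x * (y * z). -/
/-- The geometric realization of a sub-cube word `x : Fin n → SignType`
as a face of the cube `[-1,1]^n ⊆ (Fin n → ℝ)`. -/
def geom {n : ℕ} (x : Fin n → SignType) : Set (Fin n → ℝ) :=
  {p | ∀ i, (x i = 0 → p i ∈ Set.Icc (-1 : ℝ) 1) ∧ (x i ≠ 0 → p i = (x i : ℝ))}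

/-- The dimension of a sub-cube: the number of `0` letters. -/
def dim {n : ℕ} (x : Fin n → SignType) : ℕ :=
  (Finset.univ.filter fun i => x i = 0).card

/-- The zero-set of a word. -/
def zeroSet {n : ℕ} (x : Fin n → SignType) : Finset (Fin n) :=
  Finset.univ.filter fun i => x i = 0

/-- The order isomorphism enumerating the zero positions of `x` in increasing order. -/
noncomputable def zeroEnum {n p : ℕ} (x : Fin n → SignType) (h : dim x = p) :
    Fin p ≃o {i // i ∈ zeroSet x} :=
  (zeroSet x).orderIsoOfFin h

/-- The pairing `x * y`: place the sub-cube `y` of the `p`-cube into the `n`-cube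
along the `p`-dimensional face `x`. -/
noncomputable def cubeMul {n p : ℕ} (x : Fin n → SignType) (h : dim x = p)
    (y : Fin p → SignType) : Fin n → SignType := fun i =>
  if hi : x i = 0 then y ((zeroEnum x h).symm ⟨i, by simp [zeroSet, hi]⟩) else x i

lemma mem_zeroSet {n : ℕ} {x : Fin n → SignType} {i : Fin n} :
    i ∈ zeroSet x ↔ x i = 0 := by simp [zeroSet]

lemma cubeMul_apply_zero {n p : ℕ} (x : Fin n → SignType) (hx : dim x = p)
    (y : Fin p → SignType) (i : Fin n) (hi : x i = 0) :
    cubeMul x hx y i = y ((zeroEnum x hx).symm ⟨i, mem_zeroSet.2 hi⟩) := by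
  simp [cubeMul, hi]

lemma cubeMul_apply_ne {n p : ℕ} (x : Fin n → SignType) (hx : dim x = p)
    (y : Fin p → SignType) (i : Fin n) (hi : x i ≠ 0) :
    cubeMul x hx y i = x i := by
  simp [cubeMul, hi]

lemma cubeMul_zeroEnum {n p : ℕ} (x : Fin n → SignType) (hx : dim x = p)
    (y : Fin p → SignType) (j : Fin p) :
    cubeMul x hx y ((zeroEnum x hx j : Fin n)) = y j := by
  have hz : x ((zeroEnum x hx j : Fin n)) = 0 := mem_zeroSet.1 (zeroEnum x hx j).2
  rw [cubeMul_apply_zero x hx y _ hz]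
  congr 1
  have : (⟨(zeroEnum x hx j : Fin n), mem_zeroSet.2 hz⟩ : {i // i ∈ zeroSet x}) =
      zeroEnum x hx j := rfl
  rw [this, OrderIso.symm_apply_apply]

/-- Associativity of the pairing `*`: `(x * y) * z = x * (y * z)`, where the fact that
`x * y` has dimension `q` (which follows from `dim y = q`) makes `(x * y) * z` defined. -/
theorem stmt_10 {n p q : ℕ} (x : Fin n → SignType) (hx : dim x = p)
    (y : Fin p → SignType) (hy : dim y = q) (z : Fin q → SignType)
    (hxy : dim (cubeMul x hx y) = q) :
    cubeMul (cubeMul x hx y) hxy z = cubeMul x hx (cubeMul y hy z) := by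
  set e := zeroEnum x hx with he
  set f := zeroEnum y hy with hf
  set E := zeroEnum (cubeMul x hx y) hxy with hE
  -- the candidate enumeration of zeros of x*y
  have gmem : ∀ k : Fin q, ((e (f k) : Fin n)) ∈ zeroSet (cubeMul x hx y) := by
    intro k
    have hyz : y ((f k : Fin p)) = 0 := mem_zeroSet.1 (f k).2
    have : cubeMul x hx y ((e (f k) : Fin n)) = y ((f k : Fin p)) :=
      cubeMul_zeroEnum x hx y (f k)
    exact mem_zeroSet.2 (this.trans hyz)
  let g : Fin q → Fin n := fun k => ((e (f k) : Fin n))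
  have gmono : StrictMono g := by
    intro k k' hk
    exact Subtype.coe_lt_coe.2 (e.strictMono (f.strictMono hk))
  have gemb : g = (zeroSet (cubeMul x hx y)).orderEmbOfFin hxy :=
    Finset.orderEmbOfFin_unique hxy gmem gmono
  have hG : ∀ k, ((E k : Fin n)) = g k := by
    intro k
    rw [gemb, hE]
    exact Finset.coe_orderIsoOfFin_apply _ hxy k
  funext i
  by_cases hxi : x i = 0
  · have hmem : i ∈ zeroSet x := mem_zeroSet.2 hxi
    by_cases hyi : y ((e.symm ⟨i, hmem⟩ : Fin p)) = 0
    · -- both zero: both sides are z of corresponding index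
      have hzero : cubeMul x hx y i = 0 := by
        rw [cubeMul_apply_zero x hx y i hxi]; exact hyi
      have L : cubeMul (cubeMul x hx y) hxy z i =
          z ((E.symm ⟨i, mem_zeroSet.2 hzero⟩ : Fin q)) :=
        cubeMul_apply_zero _ hxy z i hzero
      have R : cubeMul x hx (cubeMul y hy z) i =
          cubeMul y hy z ((e.symm ⟨i, hmem⟩ : Fin p)) :=
        cubeMul_apply_zero x hx _ i hxi
      have R2 : cubeMul y hy z ((e.symm ⟨i, hmem⟩ : Fin p)) =
          z ((f.symm ⟨e.symm ⟨i, hmem⟩, mem_zeroSet.2 hyi⟩ : Fin q)) :=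
        cubeMul_apply_zero y hy z _ hyi
      have key : E.symm ⟨i, mem_zeroSet.2 hzero⟩ =
          f.symm ⟨e.symm ⟨i, hmem⟩, mem_zeroSet.2 hyi⟩ := by
        rw [OrderIso.symm_apply_eq]
        apply Subtype.ext
        have := hG (f.symm ⟨e.symm ⟨i, hmem⟩, mem_zeroSet.2 hyi⟩)
        rw [this]
        show i = ((e (f (f.symm ⟨e.symm ⟨i, hmem⟩, mem_zeroSet.2 hyi⟩)) : Fin n))
        rw [OrderIso.apply_symm_apply]
        exact (congrArg Subtype.val (e.apply_symm_apply ⟨i, hmem⟩)).symm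
      rw [L, R, R2, key]
    · -- x i = 0, y value nonzero
      have hne : cubeMul x hx y i ≠ 0 := by
        rw [cubeMul_apply_zero x hx y i hxi]; exact hyi
      have L : cubeMul (cubeMul x hx y) hxy z i = cubeMul x hx y i :=
        cubeMul_apply_ne _ hxy z i hne
      have L2 : cubeMul x hx y i = y ((e.symm ⟨i, hmem⟩ : Fin p)) :=
        cubeMul_apply_zero x hx y i hxi
      have R : cubeMul x hx (cubeMul y hy z) i =
          cubeMul y hy z ((e.symm ⟨i, hmem⟩ : Fin p)) :=
        cubeMul_apply_zero x hx _ i hxi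
      have R2 : cubeMul y hy z ((e.symm ⟨i, hmem⟩ : Fin p)) =
          y ((e.symm ⟨i, hmem⟩ : Fin p)) :=
        cubeMul_apply_ne y hy z _ hyi
      rw [L, L2, R, R2]
  · -- x i ≠ 0
    have hne : cubeMul x hx y i ≠ 0 := by
      rw [cubeMul_apply_ne x hx y i hxi]; exact hxi
    have L : cubeMul (cubeMul x hx y) hxy z i = cubeMul x hx y i :=
      cubeMul_apply_ne _ hxy z i hne
    rw [L, cubeMul_apply_ne x hx y i hxi, cubeMul_apply_ne x hx _ i hxi]
end

section
/- For every n ≥ 1 and every k with 0 ≤ k ≤ n-1, the source and target k-faces are disjoint: ψ k n ∩ ω k n = ∅. -/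
/-- Append the letter `s` at the end of a word (`λ`, `μ`, `ν` are `app (-1)`, `app 0`, `app 1`). -/
def app {n : ℕ} (s : SignType) (x : Fin n → SignType) : Fin (n + 1) → SignType :=
  Fin.snoc x s

/-- The source `k`-faces `ψ k n` of the `n`-cube. -/
def Psi : (k n : ℕ) → Finset (Fin n → SignType)
  | _, 0 => {fun i => i.elim0}
  | 0, _ + 1 => {fun _ => -1}
  | k + 1, n + 1 =>
    if n + 1 ≤ k + 1 then {fun _ => 0}
    else if Even (k + 1) then
      (Psi k n).image (app 0) ∪ (Psi (k + 1) n).image (app (-1))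
    else
      (Psi k n).image (app 0) ∪ (Psi (k + 1) n).image (app 1)

/-- The target `k`-faces `ω k n` of the `n`-cube. -/
def Omega : (k n : ℕ) → Finset (Fin n → SignType)
  | _, 0 => {fun i => i.elim0}
  | 0, _ + 1 => {fun _ => 1}
  | k + 1, n + 1 =>
    if n + 1 ≤ k + 1 then {fun _ => 0}
    else if Even (k + 1) then
      (Omega (k + 1) n).image (app 1) ∪ (Omega k n).image (app 0)
    else
      (Omega (k + 1) n).image (app (-1)) ∪ (Omega k n).image (app 0)

lemma app_inj' {n : ℕ} {s t : SignType} {x y : Fin n → SignType}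
    (h : app s x = app t y) : s = t ∧ x = y := by
  constructor
  · have := congrFun h (Fin.last n)
    simpa [app, Fin.snoc_last] using this
  · funext i
    have := congrFun h i.castSucc
    simpa [app, Fin.snoc_castSucc] using this

/-- For `k ≤ n - 1` the source and target `k`-faces are disjoint. -/
theorem stmt_12 (n k : ℕ) (hn : 1 ≤ n) (hk : k ≤ n - 1) :
    Psi k n ∩ Omega k n = ∅ := by
  have key : ∀ n k, k < n → Psi k n ∩ Omega k n = ∅ := by
    intro n
    induction n with
    | zero => intro k hk; omega
    | succ n ih =>
      intro k hk
      match k with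
      | 0 =>
        rw [Psi, Omega]
        rw [Finset.singleton_inter_of_notMem]
        simp only [Finset.mem_singleton]
        intro h
        have := congrFun h 0
        simp at this
      | k + 1 =>
        have hne : ¬ (n + 1 ≤ k + 1) := by omega
        rw [Psi, Omega, if_neg hne, if_neg hne]
        have hih := Finset.eq_empty_iff_forall_notMem.mp (ih k (by omega))
        by_cases he : Even (k + 1) <;>
          simp only [he, if_pos, if_neg, if_true, if_false] <;>
          · rw [Finset.eq_empty_iff_forall_notMem]
            intro z hz
            simp only [Finset.mem_inter, Finset.mem_union, Finset.mem_image] at hz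
            obtain ⟨h1 | h1, h2 | h2⟩ := hz <;>
              obtain ⟨x, hx, rfl⟩ := h1 <;>
              obtain ⟨y, hy, hxy⟩ := h2 <;>
              obtain ⟨hst, hxy⟩ := app_inj' hxy.symm <;>
              first
                | (subst hxy; exact hih y (Finset.mem_inter.mpr ⟨hx, hy⟩))
                | (subst hxy; exact hih x (Finset.mem_inter.mpr ⟨hx, hy⟩))
                | simp at hst
  exact key n k (by omega)
end

section
/- Geometric antipodal symmetry: for every n and every k, the target k-disk is the image of the source k-disk under the antipodal map of ℝⁿ, i.e. ⋃_{x ∈ ω k n} geom x = (fun p : Fin n → ℝ => -p) '' (⋃_{x ∈ ψ k n} geom x). -/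
lemma signtype_neg_eq_zero (s : SignType) : -s = 0 ↔ s = 0 := by
  cases s <;> simp

lemma signtype_coe_neg (s : SignType) : ((-s : SignType) : ℝ) = -(s : ℝ) := by
  cases s <;> simp

lemma geom_neg' {n : ℕ} (x : Fin n → SignType) (p : Fin n → ℝ) :
    p ∈ geom (-x) ↔ -p ∈ geom x := by
  constructor <;> intro hp i <;> have h := hp i
  · refine ⟨fun h0 => ?_, fun hne => ?_⟩
    · have := h.1 (show -(x i) = 0 from (signtype_neg_eq_zero _).mpr h0)
      exact ⟨by simpa using neg_le_neg this.2, by simpa using neg_le_neg this.1⟩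
    · have := h.2 (fun hc => hne ((signtype_neg_eq_zero _).mp hc))
      have h2 : p i = -(x i : ℝ) := by rw [this]; exact signtype_coe_neg (x i)
      simp [Pi.neg_apply, h2]
  · refine ⟨fun h0 => ?_, fun hne => ?_⟩
    · have := h.1 ((signtype_neg_eq_zero _).mp h0)
      simp only [Pi.neg_apply, Set.mem_Icc] at this
      exact ⟨by linarith [this.2], by linarith [this.1]⟩
    · have := h.2 (fun hc => hne ((signtype_neg_eq_zero _).mpr hc))
      simp only [Pi.neg_apply] at this
      have : p i = -(x i : ℝ) := by linarith
      rw [this, ← signtype_coe_neg]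
      rfl

lemma geom_neg {n : ℕ} (x : Fin n → SignType) :
    geom (-x) = (fun p : Fin n → ℝ => -p) '' geom x := by
  ext p
  simp only [Set.mem_image]
  constructor
  · intro hp
    exact ⟨-p, (geom_neg' x p).1 hp, by simp⟩
  · rintro ⟨q, hq, rfl⟩
    refine (geom_neg' x (-q)).2 ?_
    simpa using hq

lemma neg_app {n : ℕ} (s : SignType) (x : Fin n → SignType) :
    -(app s x) = app (-s) (-x) := by
  funext i
  refine Fin.lastCases ?_ ?_ i <;>
    simp [app, Pi.neg_apply, Fin.snoc_last, Fin.snoc_castSucc]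

lemma image_neg_app {n : ℕ} (s : SignType) (S : Finset (Fin n → SignType)) :
    (S.image (app s)).image (fun x => -x) = (S.image (fun x => -x)).image (app (-s)) := by
  rw [Finset.image_image, Finset.image_image]
  exact Finset.image_congr (fun x _ => neg_app s x)

lemma omega_eq (k n : ℕ) : Omega k n = (Psi k n).image (fun x => -x) := by
  induction n generalizing k with
  | zero =>
    have h1 : Omega k 0 = {fun i : Fin 0 => i.elim0} := by cases k <;> rfl
    have h2 : Psi k 0 = {fun i : Fin 0 => i.elim0} := by cases k <;> rfl
    rw [h1, h2, Finset.image_singleton]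
    congr 1
    funext i
    exact i.elim0
  | succ n ih =>
    cases k with
    | zero =>
      rw [show Omega 0 (n+1) = {fun _ => 1} from rfl,
          show Psi 0 (n+1) = {fun _ => -1} from rfl, Finset.image_singleton]
      congr 1
    | succ k =>
      rw [Omega, Psi]
      split
      · rw [Finset.image_singleton]
        congr 1
      · split <;>
        · rw [Finset.image_union, image_neg_app, image_neg_app, ← ih, ← ih]
          simp only [neg_zero, neg_neg]
          exact (Finset.union_comm _ _)

/-- Geometric antipodal symmetry: the target `k`-disk is the image of the source
`k`-disk under the antipodal map of `ℝⁿ`. -/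
theorem stmt_19 (n k : ℕ) :
    (⋃ x ∈ Omega k n, geom x) =
      (fun p : Fin n → ℝ => -p) '' ⋃ x ∈ Psi k n, geom x := by
  rw [omega_eq]
  ext q
  simp only [Set.mem_iUnion, Finset.mem_image, Set.mem_image, exists_prop]
  constructor
  · rintro ⟨x, ⟨y, hy, rfl⟩, hq⟩
    rw [geom_neg] at hq
    obtain ⟨p, hp, rfl⟩ := hq
    exact ⟨p, ⟨y, hy, hp⟩, rfl⟩
  · rintro ⟨p, ⟨y, hy, hp⟩, rfl⟩
    refine ⟨-y, ⟨y, hy, rfl⟩, ?_⟩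
    rw [geom_neg]
    exact ⟨p, hp, rfl⟩
end
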